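/- Let V be a nonempty finite type with n = |V| ≥ 2, α : V → V → ℝ antisymmetric, and let x ≠ y in V. Let (w, m) and (w', m') be weights on V such that w' x y = w' y x = 0, w v u ≤ w' v u for all pairs {v,u} ≠ {x,y}, and m' v ≤ m v for all v ∈ V. Then λ_k(w, m, α) ≤ λ_{k+1}(w', m', α) for all 1 ≤ k ≤ n − 1. -/

import Mathlib

/-!
Write `Δ(w,m,α) = M⁻¹ K` with `M = diag m` and `K = Δ(w,1,α)` Hermitian. Then
`M^{-1/2} K M^{-1/2}` is Hermitian with the same spectrum, and `ψ = M^{1/2} φ` turns its quadratic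
form into the magnetic energy `Q(φ) = ½ Σ_{v,u} w v u |φ v - e^{iα v u} φ u|²` and `‖ψ‖²` into
`Σ_v m v |φ v|²`. Courant–Fischer then gives a subspace of codimension `k - 1` on which
`Q ≥ λ_k · Σ m |φ|²` and one of dimension `k + 1` on which `Q' ≤ λ'_{k+1} · Σ m' |φ|²`. Together
with the hyperplane `φ x = e^{iα x y} φ y`, on which the `{x,y}` term of `Q` vanishes, they meet
in a nonzero `φ`, and
`λ_k Σ m |φ|² ≤ Q(φ) ≤ Q'(φ) ≤ λ'_{k+1} Σ m' |φ|² ≤ λ'_{k+1} Σ m |φ|²`,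
the last step because `Q' ≥ 0` forces `λ'_{k+1} ≥ 0`.
-/

/-- The magnetic weighted Laplacian `Δ(w,m,α)` as a matrix acting on `ℂ^V`:
`(Δφ)(v) = (1/m v) · Σ_u w v u · (φ(v) − exp(i·α v u)·φ(u))`. -/
noncomputable def magLap {V : Type} [Fintype V] [DecidableEq V]
    (w : V → V → ℝ) (m : V → ℝ) (α : V → V → ℝ) : Matrix V V ℂ :=
  fun v u => (if v = u then (((∑ u', w v u') / m v : ℝ) : ℂ) else 0)
    - ((w v u / m v : ℝ) : ℂ) * Complex.exp (Complex.I * (α v u : ℝ))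

/-- The eigenvalues (with multiplicity, nondecreasing) of a matrix with real
spectrum: real parts of the roots of the characteristic polynomial, sorted;
`lamk A k` is the `(k+1)`-st smallest (0-based index). -/
noncomputable def lamk {V : Type} [Fintype V] [DecidableEq V] (A : Matrix V V ℂ) (k : ℕ) : ℝ :=
  ((A.charpoly.roots.map Complex.re).sort (· ≤ ·)).getD k 0

open Module

namespace List.SortedLE
variable {α : Type*} [LinearOrder α] {L : List α}

theorem length_sub_le_countP_getD_le (hL : L.SortedLE) (d : α) (j : ℕ) :
    L.length - j ≤ L.countP (fun a => L.getD j d ≤ a) := by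
  rcases lt_or_ge j L.length with hj | hj
  · calc L.length - j = (L.drop j).length := List.length_drop.symm
      _ = (L.drop j).countP _ := (List.countP_eq_length.2 ?_).symm
      _ ≤ _ := (List.drop_sublist j L).countP_le
    intro a ha
    obtain ⟨i, hi, rfl⟩ := List.getElem_of_mem ha
    simp only [List.getElem_drop, List.getD_eq_getElem _ _ hj, decide_eq_true_eq]
    exact hL.getElem_le_getElem_of_le (Nat.le_add_right j i)
  · simp [hj]

theorem lt_countP_le_getD (hL : L.SortedLE) (d : α) {j : ℕ} (hj : j < L.length) :
    j < L.countP (fun a => a ≤ L.getD j d) := by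
  calc j < (L.take (j + 1)).length := by simp; omega
    _ = (L.take (j + 1)).countP _ := (List.countP_eq_length.2 ?_).symm
    _ ≤ _ := (List.take_sublist _ L).countP_le
  intro a ha
  obtain ⟨i, hi, rfl⟩ := List.getElem_of_mem ha
  simp only [List.length_take] at hi
  simp only [List.getElem_take, List.getD_eq_getElem _ _ hj, decide_eq_true_eq]
  exact hL.getElem_le_getElem_of_le (by omega)

end List.SortedLE

namespace Multiset
variable {α : Type*} [LinearOrder α]

theorem card_sub_le_countP_sort_getD_le (M : Multiset α) (d : α) (j : ℕ) :
    card M - j ≤ M.countP (fun a => (M.sort (· ≤ ·)).getD j d ≤ a) := by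
  have := (pairwise_sort M (· ≤ ·)).sortedLE.length_sub_le_countP_getD_le d j
  rwa [length_sort, ← coe_countP, sort_eq] at this

theorem lt_countP_le_sort_getD (M : Multiset α) (d : α) {j : ℕ} (hj : j < card M) :
    j < M.countP (fun a => a ≤ (M.sort (· ≤ ·)).getD j d) := by
  have := (pairwise_sort M (· ≤ ·)).sortedLE.lt_countP_le_getD d (j := j) (by rwa [length_sort])
  rwa [← coe_countP, sort_eq] at this

end Multiset

section OrthonormalEigenbasis

open scoped InnerProductSpace

variable {𝕜 E ι : Type*} [RCLike 𝕜] [NormedAddCommGroup E] [InnerProductSpace 𝕜 E] [Fintype ι]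

theorem OrthonormalBasis.exists_card_le_finrank_forall_inner_eq_zero (b : OrthonormalBasis ι 𝕜 E)
    (p : ι → Prop) [DecidablePred p] :
    ∃ S : Submodule 𝕜 E, Fintype.card {i // p i} ≤ finrank 𝕜 S ∧
      ∀ x ∈ S, ∀ i, ¬ p i → ⟪b i, x⟫_𝕜 = 0 := by
  have : FiniteDimensional 𝕜 E := b.toBasis.finiteDimensional_of_finite
  let f : E →ₗ[𝕜] {i // ¬ p i} → 𝕜 := LinearMap.pi fun i => innerₛₗ 𝕜 (b i)
  refine ⟨LinearMap.ker f, ?_, fun x hx i hi => congrFun (LinearMap.mem_ker.1 hx) ⟨i, hi⟩⟩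
  have hrank := LinearMap.finrank_range_add_finrank_ker f
  have hrange := Submodule.finrank_le (LinearMap.range f)
  rw [finrank_fintype_fun_eq_card, Fintype.card_subtype_compl] at hrange
  rw [finrank_eq_card_basis b.toBasis] at hrank
  have := Fintype.card_subtype_le p
  omega

namespace LinearMap.IsSymmetric
variable {T : E →ₗ[𝕜] E} {b : OrthonormalBasis ι 𝕜 E} {μ : ι → ℝ}

theorem re_inner_apply_eq_sum (hT : T.IsSymmetric) (hb : ∀ i, T (b i) = (μ i : 𝕜) • b i)
    (x : E) : RCLike.re ⟪x, T x⟫_𝕜 = ∑ i, μ i * ‖⟪b i, x⟫_𝕜‖ ^ 2 := by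
  rw [← b.sum_inner_mul_inner x (T x), map_sum]
  refine Finset.sum_congr rfl fun i _ => ?_
  rw [← hT, hb, inner_smul_left, RCLike.conj_ofReal, mul_left_comm, ← inner_conj_symm (b i) x,
    RCLike.mul_conj, RCLike.norm_conj, ← RCLike.ofReal_pow, ← RCLike.ofReal_mul, RCLike.ofReal_re]

theorem exists_card_le_finrank_forall_mul_norm_sq_le (hT : T.IsSymmetric)
    (hb : ∀ i, T (b i) = (μ i : 𝕜) • b i) (c : ℝ) :
    ∃ S : Submodule 𝕜 E, Fintype.card {i // c ≤ μ i} ≤ finrank 𝕜 S ∧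
      ∀ x ∈ S, c * ‖x‖ ^ 2 ≤ RCLike.re ⟪x, T x⟫_𝕜 := by
  obtain ⟨S, hS, hSb⟩ := b.exists_card_le_finrank_forall_inner_eq_zero (fun i => c ≤ μ i)
  refine ⟨S, hS, fun x hx => ?_⟩
  rw [hT.re_inner_apply_eq_sum hb, ← b.sum_sq_norm_inner_right, Finset.mul_sum]
  refine Finset.sum_le_sum fun i _ => ?_
  by_cases hi : c ≤ μ i
  · exact mul_le_mul_of_nonneg_right hi (sq_nonneg _)
  · simp [hSb x hx i hi]

theorem exists_card_le_finrank_forall_le_mul_norm_sq (hT : T.IsSymmetric)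
    (hb : ∀ i, T (b i) = (μ i : 𝕜) • b i) (c : ℝ) :
    ∃ S : Submodule 𝕜 E, Fintype.card {i // μ i ≤ c} ≤ finrank 𝕜 S ∧
      ∀ x ∈ S, RCLike.re ⟪x, T x⟫_𝕜 ≤ c * ‖x‖ ^ 2 := by
  obtain ⟨S, hS, hSb⟩ := b.exists_card_le_finrank_forall_inner_eq_zero (fun i => μ i ≤ c)
  refine ⟨S, hS, fun x hx => ?_⟩
  rw [hT.re_inner_apply_eq_sum hb, ← b.sum_sq_norm_inner_right, Finset.mul_sum]
  refine Finset.sum_le_sum fun i _ => ?_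
  by_cases hi : μ i ≤ c
  · exact mul_le_mul_of_nonneg_right hi (sq_nonneg _)
  · simp [hSb x hx i hi]

end LinearMap.IsSymmetric

theorem Matrix.IsHermitian.toEuclideanLin_eigenvectorBasis {n : Type*} [Fintype n] [DecidableEq n]
    {A : Matrix n n 𝕜} (hA : A.IsHermitian) (i : n) :
    toEuclideanLin A (hA.eigenvectorBasis i) = (hA.eigenvalues i : 𝕜) • hA.eigenvectorBasis i := by
  rw [toLpLin_apply, hA.mulVec_eigenvectorBasis, RCLike.real_smul_eq_coe_smul (K := 𝕜)]
  rfl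

end OrthonormalEigenbasis

open Matrix Complex
open scoped ComplexConjugate InnerProductSpace

theorem star_exp_I_mul_of_antisymm {V : Type*} {α : V → V → ℝ} (hα : ∀ v u, α v u = -α u v)
    (v u : V) : star (exp (I * α v u)) = exp (I * α u v) := by
  rw [star_def, ← exp_conj, map_mul, conj_I, conj_ofReal, hα v u, ofReal_neg]
  ring_nf

theorem Complex.re_conj_mul_sub_add_re_conj_mul_sub (a b : ℂ) {e : ℂ} (he : ‖e‖ = 1) :
    (conj a * (a - e * b)).re + (conj b * (b - conj e * a)).re = ‖a - e * b‖ ^ 2 := by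
  have he' : conj e * e = 1 := by rw [conj_mul', he]; norm_num
  rw [← add_re, ← ofReal_re (‖a - e * b‖ ^ 2), ofReal_pow, ← conj_mul', map_sub, map_mul]
  congr 1
  linear_combination (-(conj b * b)) * he'

section WeightedForms
variable {V : Type} [Fintype V]

noncomputable def magEnergy (w α : V → V → ℝ) (φ : V → ℂ) : ℝ :=
  ∑ v, ∑ u, w v u / 2 * ‖φ v - exp (I * α v u) * φ u‖ ^ 2

noncomputable def massNormSq (m : V → ℝ) (φ : V → ℂ) : ℝ :=
  ∑ v, m v * ‖φ v‖ ^ 2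

theorem magEnergy_nonneg {w : V → V → ℝ} (hw : ∀ v u, 0 ≤ w v u) (α : V → V → ℝ) (φ : V → ℂ) :
    0 ≤ magEnergy w α φ :=
  Finset.sum_nonneg fun v _ => Finset.sum_nonneg fun u _ =>
    mul_nonneg (div_nonneg (hw v u) zero_le_two) (sq_nonneg _)

theorem magEnergy_le_of_phase {w w' α : V → V → ℝ} {x y : V} (hα : ∀ v u, α v u = -α u v)
    (hww' : ∀ v u, s(v, u) ≠ s(x, y) → w v u ≤ w' v u) {φ : V → ℂ}
    (hφ : φ x = exp (I * α x y) * φ y) : magEnergy w α φ ≤ magEnergy w' α φ := by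
  refine Finset.sum_le_sum fun v _ => Finset.sum_le_sum fun u _ => ?_
  by_cases hvu : s(v, u) = s(x, y)
  · suffices φ v - exp (I * α v u) * φ u = 0 by simp [this]
    rcases Sym2.eq_iff.1 hvu with ⟨rfl, rfl⟩ | ⟨rfl, rfl⟩
    · rw [hφ, sub_self]
    · rw [hφ, ← mul_assoc, ← exp_add, ← mul_add, ← ofReal_add, hα, neg_add_cancel, ofReal_zero,
        mul_zero, exp_zero, one_mul, sub_self]
  · exact mul_le_mul_of_nonneg_right (by linarith [hww' v u hvu]) (sq_nonneg _)

theorem massNormSq_le_massNormSq {m m' : V → ℝ} (h : ∀ v, m' v ≤ m v) (φ : V → ℂ) :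
    massNormSq m' φ ≤ massNormSq m φ :=
  Finset.sum_le_sum fun v _ => mul_le_mul_of_nonneg_right (h v) (sq_nonneg _)

theorem massNormSq_pos {m : V → ℝ} (hm : ∀ v, 0 < m v) {φ : V → ℂ} (hφ : φ ≠ 0) :
    0 < massNormSq m φ := by
  obtain ⟨v, hv⟩ := Function.ne_iff.1 hφ
  exact Finset.sum_pos' (fun v _ => mul_nonneg (hm v).le (sq_nonneg _))
    ⟨v, Finset.mem_univ v, mul_pos (hm v) (pow_pos (norm_pos_iff.2 hv) 2)⟩

end WeightedForms

section MagneticLaplacian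
variable {V : Type} [Fintype V] [DecidableEq V]

theorem magLap_eq_diagonal_mul (w α : V → V → ℝ) (m : V → ℝ) :
    magLap w m α = diagonal (fun v => ((m v)⁻¹ : ℂ)) * magLap w 1 α := by
  ext v u
  simp only [magLap, diagonal_mul, Pi.one_apply, div_one]
  split_ifs <;> push_cast <;> ring

theorem isHermitian_magLap_one {w α : V → V → ℝ} (hw : ∀ v u, w v u = w u v)
    (hα : ∀ v u, α v u = -α u v) : (magLap w 1 α).IsHermitian := by
  ext v u
  simp only [conjTranspose_apply, magLap, Pi.one_apply, div_one, star_sub, star_mul',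
    star_exp_I_mul_of_antisymm hα, hw u v, eq_comm (a := u)]
  split_ifs with h
  · subst h; simp [Complex.conj_ofReal]
  · simp [Complex.conj_ofReal]

theorem mulVec_magLap_one (w α : V → V → ℝ) (φ : V → ℂ) (v : V) :
    (magLap w 1 α *ᵥ φ) v = ∑ u, (w v u : ℂ) * (φ v - exp (I * α v u) * φ u) := by
  simp only [mulVec, dotProduct, magLap, Pi.one_apply, div_one, sub_mul, ite_mul, zero_mul,
    Finset.sum_sub_distrib, Finset.sum_ite_eq, Finset.mem_univ, if_true, mul_sub,
    ofReal_sum, Finset.sum_mul, mul_assoc]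

theorem re_star_dotProduct_magLap_one_mulVec {w α : V → V → ℝ} (hw : ∀ v u, w v u = w u v)
    (hα : ∀ v u, α v u = -α u v) (φ : V → ℂ) :
    (star φ ⬝ᵥ (magLap w 1 α *ᵥ φ)).re = magEnergy w α φ := by
  set f : V → V → ℝ := fun v u => w v u * (conj (φ v) * (φ v - exp (I * α v u) * φ u)).re
  have hpair : ∀ v u, f v u + f u v = w v u * ‖φ v - exp (I * α v u) * φ u‖ ^ 2 := fun v u => by
    simp only [f, hw u v, ← star_exp_I_mul_of_antisymm hα v u, ← mul_add, star_def]
    rw [Complex.re_conj_mul_sub_add_re_conj_mul_sub _ _ (norm_exp_I_mul_ofReal _)]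
  calc (star φ ⬝ᵥ (magLap w 1 α *ᵥ φ)).re = ∑ v, ∑ u, f v u := by
        simp only [dotProduct, mulVec_magLap_one, Finset.mul_sum, re_sum, Pi.star_apply,
          star_def, f, mul_left_comm (conj _), re_ofReal_mul]
    _ = ∑ v, ∑ u, (f v u + f u v) / 2 := by
        have hsymm : ∑ v, ∑ u, f v u = ∑ v, ∑ u, f u v := Finset.sum_comm
        simp only [add_div, Finset.sum_add_distrib, ← Finset.sum_div, ← hsymm]
        ring
    _ = magEnergy w α φ := by
        simp only [hpair, magEnergy, div_mul_eq_mul_div]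

noncomputable def invSqrtMass (m : V → ℝ) : Matrix V V ℂ :=
  diagonal fun v => (((√(m v))⁻¹ : ℝ) : ℂ)

noncomputable def symmMagLap (w : V → V → ℝ) (m : V → ℝ) (α : V → V → ℝ) : Matrix V V ℂ :=
  invSqrtMass m * magLap w 1 α * invSqrtMass m

theorem invSqrtMass_mul_self {m : V → ℝ} (hm : ∀ v, 0 < m v) :
    invSqrtMass m * invSqrtMass m = diagonal fun v => ((m v)⁻¹ : ℂ) := by
  rw [invSqrtMass, diagonal_mul_diagonal]
  congr 1 with v
  rw [← ofReal_mul, ← mul_inv, Real.mul_self_sqrt (hm v).le, ofReal_inv]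

theorem isHermitian_symmMagLap {w α : V → V → ℝ} (hw : ∀ v u, w v u = w u v)
    (hα : ∀ v u, α v u = -α u v) (m : V → ℝ) : (symmMagLap w m α).IsHermitian := by
  have hD : (invSqrtMass m)ᴴ = invSqrtMass m := by
    simp [invSqrtMass, diagonal_conjTranspose, Pi.star_def]
  have := isHermitian_conjTranspose_mul_mul (invSqrtMass m) (isHermitian_magLap_one hw hα)
  rwa [hD] at this

theorem charpoly_symmMagLap (w α : V → V → ℝ) {m : V → ℝ} (hm : ∀ v, 0 < m v) :
    (symmMagLap w m α).charpoly = (magLap w m α).charpoly := by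
  rw [symmMagLap, charpoly_mul_comm, ← Matrix.mul_assoc, invSqrtMass_mul_self hm,
    ← magLap_eq_diagonal_mul]

theorem lamk_magLap_eq {w α : V → V → ℝ} {m : V → ℝ} (hm : ∀ v, 0 < m v)
    (hB : (symmMagLap w m α).IsHermitian) (j : ℕ) :
    lamk (magLap w m α) j = ((Finset.univ.val.map hB.eigenvalues).sort (· ≤ ·)).getD j 0 := by
  rw [lamk, ← charpoly_symmMagLap w α hm, hB.roots_charpoly_eq_eigenvalues, Multiset.map_map]
  rfl

noncomputable def invSqrtMassLin (m : V → ℝ) : EuclideanSpace ℂ V →ₗ[ℂ] V → ℂ :=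
  toLin' (invSqrtMass m) ∘ₗ (WithLp.linearEquiv 2 ℂ (V → ℂ)).toLinearMap

theorem invSqrtMassLin_apply (m : V → ℝ) (ψ : EuclideanSpace ℂ V) :
    invSqrtMassLin m ψ = invSqrtMass m *ᵥ ψ.ofLp := rfl

theorem magEnergy_invSqrtMassLin {w α : V → V → ℝ} (hw : ∀ v u, w v u = w u v)
    (hα : ∀ v u, α v u = -α u v) (m : V → ℝ) (ψ : EuclideanSpace ℂ V) :
    magEnergy w α (invSqrtMassLin m ψ) = (⟪ψ, toEuclideanLin (symmMagLap w m α) ψ⟫_ℂ).re := by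
  rw [invSqrtMassLin_apply, ← re_star_dotProduct_magLap_one_mulVec hw hα,
    EuclideanSpace.inner_eq_star_dotProduct, toLpLin_apply, symmMagLap, ← mulVec_mulVec,
    ← mulVec_mulVec, dotProduct_comm]
  simp only [invSqrtMass, dotProduct, mulVec_diagonal, Pi.star_apply, star_mul', star_def,
    conj_ofReal]
  congr 1
  exact Finset.sum_congr rfl fun v _ => by ring

theorem massNormSq_invSqrtMassLin {m : V → ℝ} (hm : ∀ v, 0 < m v) (ψ : EuclideanSpace ℂ V) :
    massNormSq m (invSqrtMassLin m ψ) = ‖ψ‖ ^ 2 := by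
  rw [EuclideanSpace.norm_sq_eq, massNormSq]
  refine Finset.sum_congr rfl fun v _ => ?_
  rw [invSqrtMassLin_apply, invSqrtMass, mulVec_diagonal, norm_mul, mul_pow, norm_real,
    Real.norm_eq_abs, sq_abs, inv_pow, Real.sq_sqrt (hm v).le, mul_inv_cancel_left₀ (hm v).ne']

theorem finrank_map_invSqrtMassLin {m : V → ℝ} (hm : ∀ v, 0 < m v)
    (S : Submodule ℂ (EuclideanSpace ℂ V)) :
    finrank ℂ (S.map (invSqrtMassLin m)) = finrank ℂ S := by
  refine (S.equivMapOfInjective _ fun ψ₁ ψ₂ h => ?_).finrank_eq.symm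
  ext v
  have hv := congrFun h v
  simp only [invSqrtMassLin_apply, invSqrtMass, mulVec_diagonal] at hv
  refine mul_left_cancel₀ ?_ hv
  exact_mod_cast (inv_pos.2 (Real.sqrt_pos.2 (hm v))).ne'

theorem card_sub_le_card_lamk_magLap_le {w α : V → V → ℝ} {m : V → ℝ} (hm : ∀ v, 0 < m v)
    (hB : (symmMagLap w m α).IsHermitian) (j : ℕ) :
    Fintype.card V - j ≤ Fintype.card {i // lamk (magLap w m α) j ≤ hB.eigenvalues i} := by
  have := Multiset.card_sub_le_countP_sort_getD_le (Finset.univ.val.map hB.eigenvalues) 0 j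
  rw [← lamk_magLap_eq hm hB, Multiset.countP_map, Multiset.card_map, Finset.card_val,
    Finset.card_univ] at this
  rw [Fintype.card_subtype]
  exact this

theorem lt_card_le_lamk_magLap {w α : V → V → ℝ} {m : V → ℝ} (hm : ∀ v, 0 < m v)
    (hB : (symmMagLap w m α).IsHermitian) {j : ℕ} (hj : j < Fintype.card V) :
    j < Fintype.card {i // hB.eigenvalues i ≤ lamk (magLap w m α) j} := by
  have := Multiset.lt_countP_le_sort_getD (Finset.univ.val.map hB.eigenvalues) 0 (j := j)
    (by simpa using hj)
  rw [← lamk_magLap_eq hm hB, Multiset.countP_map] at this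
  rw [Fintype.card_subtype]
  exact this

theorem exists_card_sub_le_finrank_forall_lamk_mul_le_magEnergy {w α : V → V → ℝ}
    (hw : ∀ v u, w v u = w u v) (hα : ∀ v u, α v u = -α u v) {m : V → ℝ} (hm : ∀ v, 0 < m v)
    (j : ℕ) : ∃ S : Submodule ℂ (V → ℂ), Fintype.card V - j ≤ finrank ℂ S ∧
      ∀ φ ∈ S, lamk (magLap w m α) j * massNormSq m φ ≤ magEnergy w α φ := by
  have hB := isHermitian_symmMagLap hw hα m
  obtain ⟨S, hS, hSle⟩ := (isSymmetric_toEuclideanLin_iff.2 hB)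
    |>.exists_card_le_finrank_forall_mul_norm_sq_le hB.toEuclideanLin_eigenvectorBasis
      (lamk (magLap w m α) j)
  refine ⟨S.map (invSqrtMassLin m), ?_, ?_⟩
  · rw [finrank_map_invSqrtMassLin hm]
    exact (card_sub_le_card_lamk_magLap_le hm hB j).trans hS
  · rintro _ ⟨ψ, hψ, rfl⟩
    rw [magEnergy_invSqrtMassLin hw hα, massNormSq_invSqrtMassLin hm]
    exact hSle ψ hψ

theorem exists_lt_finrank_forall_magEnergy_le_lamk_mul {w α : V → V → ℝ}
    (hw : ∀ v u, w v u = w u v) (hα : ∀ v u, α v u = -α u v) {m : V → ℝ} (hm : ∀ v, 0 < m v)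
    {j : ℕ} (hj : j < Fintype.card V) : ∃ S : Submodule ℂ (V → ℂ), j < finrank ℂ S ∧
      ∀ φ ∈ S, magEnergy w α φ ≤ lamk (magLap w m α) j * massNormSq m φ := by
  have hB := isHermitian_symmMagLap hw hα m
  obtain ⟨S, hS, hSle⟩ := (isSymmetric_toEuclideanLin_iff.2 hB)
    |>.exists_card_le_finrank_forall_le_mul_norm_sq hB.toEuclideanLin_eigenvectorBasis
      (lamk (magLap w m α) j)
  refine ⟨S.map (invSqrtMassLin m), ?_, ?_⟩
  · rw [finrank_map_invSqrtMassLin hm]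
    exact (lt_card_le_lamk_magLap hm hB hj).trans_le hS
  · rintro _ ⟨ψ, hψ, rfl⟩
    rw [magEnergy_invSqrtMassLin hw hα, massNormSq_invSqrtMassLin hm]
    exact hSle ψ hψ

end MagneticLaplacian

theorem Submodule.exists_ne_zero_mem_of_finrank_add_lt {K E : Type*} [DivisionRing K]
    [AddCommGroup E] [Module K E] [FiniteDimensional K E] (S T U : Submodule K E)
    (h : 2 * finrank K E < finrank K S + finrank K T + finrank K U) :
    ∃ x ≠ 0, x ∈ S ∧ x ∈ T ∧ x ∈ U := by
  have hST := Submodule.finrank_sup_add_finrank_inf_eq S T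
  have hSTU := Submodule.finrank_sup_add_finrank_inf_eq (S ⊓ T) U
  have := Submodule.finrank_le (S ⊔ T)
  have := Submodule.finrank_le (S ⊓ T ⊔ U)
  obtain ⟨x, hx, hx0⟩ := Submodule.exists_mem_ne_zero_of_ne_bot (p := S ⊓ T ⊓ U) fun hbot => by
    rw [hbot, finrank_bot] at hSTU
    omega
  exact ⟨x, hx0, hx.1.1, hx.1.2, hx.2⟩

theorem LinearMap.finrank_le_finrank_ker_add_one {K E : Type*} [DivisionRing K] [AddCommGroup E]
    [Module K E] [FiniteDimensional K E] (f : E →ₗ[K] K) : finrank K E ≤ finrank K (ker f) + 1 := by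
  have := Submodule.finrank_le (range f)
  rw [finrank_self] at this
  have := finrank_range_add_finrank_ker f
  omega

theorem stmt10_general {V : Type} [Fintype V] [DecidableEq V]
    (w w' : V → V → ℝ) (m m' : V → ℝ) (α : V → V → ℝ)
    (x y : V)
    (hw_symm : ∀ v u, w v u = w u v)
    (hw'_symm : ∀ v u, w' v u = w' u v) (hw'_nonneg : ∀ v u, 0 ≤ w' v u)
    (hm : ∀ v, 0 < m v) (hm' : ∀ v, 0 < m' v)
    (hα : ∀ v u, α v u = - α u v)
    (hww' : ∀ v u, s(v, u) ≠ s(x, y) → w v u ≤ w' v u)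
    (hmm' : ∀ v, m' v ≤ m v) :
    ∀ k : ℕ, 1 ≤ k → k ≤ Fintype.card V - 1 →
      lamk (magLap w m α) (k - 1) ≤ lamk (magLap w' m' α) k := by
  intro k hk1 hk2
  obtain ⟨S, hS, hSφ⟩ :=
    exists_card_sub_le_finrank_forall_lamk_mul_le_magEnergy hw_symm hα hm (k - 1)
  obtain ⟨T, hT, hTφ⟩ :=
    exists_lt_finrank_forall_magEnergy_le_lamk_mul hw'_symm hα hm' (j := k) (by omega)
  let phase : (V → ℂ) →ₗ[ℂ] ℂ := LinearMap.proj x - exp (I * α x y) • LinearMap.proj y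
  have hH := phase.finrank_le_finrank_ker_add_one
  rw [finrank_fintype_fun_eq_card] at hH
  obtain ⟨φ, hφ0, hφS, hφT, hφH⟩ :=
    Submodule.exists_ne_zero_mem_of_finrank_add_lt S T (LinearMap.ker phase)
      (by rw [finrank_fintype_fun_eq_card]; omega)
  have hφ : φ x = exp (I * α x y) * φ y := by
    simpa [phase, sub_eq_zero] using LinearMap.mem_ker.1 hφH
  have hℓ' : 0 ≤ lamk (magLap w' m' α) k := nonneg_of_mul_nonneg_left
    ((magEnergy_nonneg hw'_nonneg α φ).trans (hTφ φ hφT)) (massNormSq_pos hm' hφ0)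
  refine le_of_mul_le_mul_right ?_ (massNormSq_pos hm hφ0)
  calc lamk (magLap w m α) (k - 1) * massNormSq m φ ≤ magEnergy w α φ := hSφ φ hφS
    _ ≤ magEnergy w' α φ := magEnergy_le_of_phase hα hww' hφ
    _ ≤ lamk (magLap w' m' α) k * massNormSq m' φ := hTφ φ hφT
    _ ≤ lamk (magLap w' m' α) k * massNormSq m φ :=
        mul_le_mul_of_nonneg_left (massNormSq_le_massNormSq hmm' φ) hℓ'

/-- deleting the edge `{x,y}` while possibly increasing the
remaining edge weights and decreasing the vertex weights shifts the
eigenvalues up by at most one index: `λ_k ≤ λ'_{k+1}`. -/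
theorem stmt10 {V : Type} [Fintype V] [DecidableEq V] [Nonempty V]
    (hn : 2 ≤ Fintype.card V)
    (w w' : V → V → ℝ) (m m' : V → ℝ) (α : V → V → ℝ)
    (x y : V) (hxy : x ≠ y)
    (hw_symm : ∀ v u, w v u = w u v) (hw_nonneg : ∀ v u, 0 ≤ w v u)
    (hw_diag : ∀ v, w v v = 0)
    (hw'_symm : ∀ v u, w' v u = w' u v) (hw'_nonneg : ∀ v u, 0 ≤ w' v u)
    (hw'_diag : ∀ v, w' v v = 0)
    (hm : ∀ v, 0 < m v) (hm' : ∀ v, 0 < m' v)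
    (hα : ∀ v u, α v u = - α u v)
    (hdel : w' x y = 0) (hdel' : w' y x = 0)
    (hww' : ∀ v u, s(v, u) ≠ s(x, y) → w v u ≤ w' v u)
    (hmm' : ∀ v, m' v ≤ m v) :
    ∀ k : ℕ, 1 ≤ k → k ≤ Fintype.card V - 1 →
      lamk (magLap w m α) (k - 1) ≤ lamk (magLap w' m' α) k :=
  stmt10_general w w' m m' α x y hw_symm hw'_symm hw'_nonneg hm hm' hα hww' hmm'
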